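/- Let d ≥ 1, l ∈ ℕ, and i ∈ ℤ^d. Then the multivariate cardinal B-spline N_{l,i} : ℝ^d → ℝ of order 3 can be implemented exactly by a ReLU² network of depth ⌈log₂ d⌉ + 2 and width at most 4d; that is, there exists such a network f with f(x) = N_{l,i}(x) for all x ∈ ℝ^d. -/
import Mathlib


open MeasureTheory

noncomputable section

/-- The open unit cube `(0,1)^d` in `ℝ^d`. -/
def openCube (d : ℕ) : Set (EuclideanSpace ℝ (Fin d)) := {x | ∀ i, x i ∈ Set.Ioo (0:ℝ) 1}

/-- The closed unit cube `[0,1]^d` in `ℝ^d`. -/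
def closedCube (d : ℕ) : Set (EuclideanSpace ℝ (Fin d)) := {x | ∀ i, x i ∈ Set.Icc (0:ℝ) 1}

/-- The squared `H¹((0,1)^d)` norm `∫ u² + ∫ ‖∇u‖²`. -/
def H1normSq (d : ℕ) (u : EuclideanSpace ℝ (Fin d) → ℝ) : ℝ :=
  (∫ x in openCube d, (u x)^2) + ∫ x in openCube d, ‖gradient u x‖^2

/-- The squared `H²((0,1)^d)` norm: the squared `H¹` norm plus the integral of
the sum of squares of all second partial derivatives. -/
def H2normSq (d : ℕ) (u : EuclideanSpace ℝ (Fin d) → ℝ) : ℝ :=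
  H1normSq d u + ∫ x in openCube d, ∑ i, ∑ j,
    (fderiv ℝ (fun y => fderiv ℝ u y (EuclideanSpace.single i 1)) x
      (EuclideanSpace.single j 1))^2

/-- The univariate cardinal B-spline of order `3` on the dyadic partition of
level `l`: `N_{l,i}(x) = 2^{2l−1}·Σ_{j=0}^{3} (−1)^j·(3 choose j)·(x − (i+j)·2^{−l})₊²`. -/
def bspline (l : ℕ) (i : ℤ) (x : ℝ) : ℝ :=
  (2:ℝ) ^ (2 * (l:ℤ) - 1) *
    ∑ j ∈ Finset.range 4,
      (-1:ℝ)^j * (Nat.choose 3 j) * (max (x - ((i:ℝ) + (j:ℝ)) * (2:ℝ)^(-(l:ℤ))) 0)^2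

/-- The multivariate cardinal B-spline of order `3`:
`N_{l,i}(x) = Π_{j=1}^d N_{l,i_j}(x_j)`. -/
def bsplineMulti (d : ℕ) (l : ℕ) (i : Fin d → ℤ) (x : EuclideanSpace ℝ (Fin d)) : ℝ :=
  ∏ j, bspline l (i j) (x j)
/-- The `ReLU` activation function `σ₁(t) = max(t,0)`. -/
noncomputable def relu1 (t : ℝ) : ℝ := max t 0

/-- The `ReLU²` activation function `σ₂(t) = max(t,0)²`. -/
noncomputable def relu2 (t : ℝ) : ℝ := (max t 0) ^ 2

/-- `NNHidden acts m W D k g` : `g : ℝ^m → ℝ^k` is a stack of `D` hidden layers of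
widths at most `W`, each layer consisting of an affine map followed by coordinatewise
activations chosen from the set `acts`. -/
inductive NNHidden (acts : Set (ℝ → ℝ)) (m W : ℕ) :
    ℕ → (k : ℕ) → (EuclideanSpace ℝ (Fin m) → (Fin k → ℝ)) → Prop
  | base : NNHidden acts m W 0 m (fun x j => x j)
  | layer {D k k' : ℕ} {g : EuclideanSpace ℝ (Fin m) → Fin k → ℝ}
      (hg : NNHidden acts m W D k g)
      (A : Matrix (Fin k') (Fin k) ℝ) (b : Fin k' → ℝ) (ρ : Fin k' → ℝ → ℝ)
      (hρ : ∀ j, ρ j ∈ acts) (hk' : k' ≤ W) :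
      NNHidden acts m W (D + 1) k' (fun x j => ρ j ((A.mulVec (g x) + b) j))

/-- `IsNetwork acts m D W u` : `u : ℝ^m → ℝ` is implemented by a neural network of
depth `D` (i.e. `D` affine maps and `D − 1` hidden activation layers) and width at
most `W`, whose hidden-unit activations all belong to `acts`. -/
def IsNetwork (acts : Set (ℝ → ℝ)) (m D W : ℕ) (u : EuclideanSpace ℝ (Fin m) → ℝ) : Prop :=
  ∃ (k : ℕ) (g : EuclideanSpace ℝ (Fin m) → Fin k → ℝ)
    (A : Matrix (Fin 1) (Fin k) ℝ) (b : ℝ),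
    NNHidden acts m W (D - 1) k g ∧ ∀ x, u x = A.mulVec (g x) 0 + b

lemma bspline_core (h y : ℝ) (hpos : 0 < h) :
    0 ≤ (max y 0)^2 - 3*(max (y-h) 0)^2 + 3*(max (y-2*h) 0)^2 - (max (y-3*h) 0)^2 := by
  rcases le_total y 0 with h0 | h0
  · rw [max_eq_right h0, max_eq_right (by linarith), max_eq_right (by linarith),
      max_eq_right (by linarith)]; norm_num
  rcases le_total y h with h1 | h1
  · rw [max_eq_left h0, max_eq_right (by linarith), max_eq_right (by linarith),
      max_eq_right (by linarith)]
    nlinarith [sq_nonneg y]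
  rcases le_total y (2*h) with h2 | h2
  · rw [max_eq_left h0, max_eq_left (by linarith), max_eq_right (by linarith),
      max_eq_right (by linarith)]
    nlinarith [mul_nonneg (sub_nonneg.2 h1) (sub_nonneg.2 h2), sq_nonneg h]
  rcases le_total y (3*h) with h3 | h3
  · rw [max_eq_left h0, max_eq_left (by linarith), max_eq_left (by linarith),
      max_eq_right (by linarith)]
    nlinarith [sq_nonneg (y - 3*h)]
  · rw [max_eq_left h0, max_eq_left (by linarith), max_eq_left (by linarith),
      max_eq_left (by linarith)]
    nlinarith

lemma bspline_nonneg (l : ℕ) (i : ℤ) (x : ℝ) : 0 ≤ bspline l i x := by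
  unfold bspline
  have hC : (0:ℝ) < (2:ℝ)^(2*(l:ℤ)-1) := zpow_pos (by norm_num) _
  apply mul_nonneg hC.le
  have hpos : (0:ℝ) < (2:ℝ)^(-(l:ℤ)) := zpow_pos (by norm_num) _
  set h := (2:ℝ)^(-(l:ℤ))
  set y := x - (i:ℝ) * h with hy
  have e0 : x - ((i:ℝ) + (0:ℕ)) * h = y := by push_cast; ring
  have e1 : x - ((i:ℝ) + (1:ℕ)) * h = y - h := by push_cast; ring
  have e2 : x - ((i:ℝ) + (2:ℕ)) * h = y - 2*h := by push_cast; ring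
  have e3 : x - ((i:ℝ) + (3:ℕ)) * h = y - 3*h := by push_cast; ring
  rw [Finset.sum_range_succ, Finset.sum_range_succ, Finset.sum_range_succ,
    Finset.sum_range_one, e0, e1, e2, e3]
  have := bspline_core h y hpos
  norm_num [Nat.choose] at this ⊢
  linarith


lemma mul_eq_relu2 (a b : ℝ) (ha : 0 ≤ a) (hb : 0 ≤ b) :
    a * b = (relu2 (a + b) - relu2 (a - b) - relu2 (b - a)) / 4 := by
  rcases le_total a b with h | h
  · rw [relu2, relu2, relu2, max_eq_left (by linarith), max_eq_right (by linarith),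
      max_eq_left (by linarith)]; ring
  · rw [relu2, relu2, relu2, max_eq_left (by linarith), max_eq_left (by linarith),
      max_eq_right (by linarith)]; ring

lemma prod_pair (F : ℕ → ℝ) (n : ℕ) :
    ∏ p ∈ Finset.range n, (F (2*p) * F (2*p+1)) = ∏ j ∈ Finset.range (2*n), F j := by
  induction n with
  | zero => simp
  | succ n ih =>
    rw [Finset.prod_range_succ, ih, show 2*(n+1) = 2*n+1+1 by ring,
      Finset.prod_range_succ, Finset.prod_range_succ]; ring

/-- `v` is an affine function of the outputs of `g`. -/
def AffIn {m n : ℕ} (g : EuclideanSpace ℝ (Fin m) → Fin n → ℝ)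
    (v : EuclideanSpace ℝ (Fin m) → ℝ) : Prop :=
  ∃ (c : Fin n → ℝ) (b : ℝ), ∀ x, v x = (∑ j, c j * g x j) + b

lemma AffIn.add {m n : ℕ} {g : EuclideanSpace ℝ (Fin m) → Fin n → ℝ} {v w}
    (hv : AffIn g v) (hw : AffIn g w) : AffIn g (fun x => v x + w x) := by
  obtain ⟨c1, b1, h1⟩ := hv; obtain ⟨c2, b2, h2⟩ := hw
  exact ⟨fun j => c1 j + c2 j, b1 + b2, fun x => by
    simp only [h1 x, h2 x, add_mul, Finset.sum_add_distrib]; ring⟩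

lemma AffIn.sub {m n : ℕ} {g : EuclideanSpace ℝ (Fin m) → Fin n → ℝ} {v w}
    (hv : AffIn g v) (hw : AffIn g w) : AffIn g (fun x => v x - w x) := by
  obtain ⟨c1, b1, h1⟩ := hv; obtain ⟨c2, b2, h2⟩ := hw
  exact ⟨fun j => c1 j - c2 j, b1 - b2, fun x => by
    simp only [h1 x, h2 x, sub_mul, Finset.sum_sub_distrib]; ring⟩

lemma AffIn.const {m n : ℕ} {g : EuclideanSpace ℝ (Fin m) → Fin n → ℝ} (r : ℝ) :
    AffIn g (fun _ => r) := ⟨fun _ => 0, r, fun x => by simp⟩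

/-- One product layer: halves the number of values. -/
lemma layer_step {m W D n k : ℕ} {g : EuclideanSpace ℝ (Fin m) → Fin n → ℝ}
    (hg : NNHidden {relu2} m W D n g)
    (vals : Fin k → EuclideanSpace ℝ (Fin m) → ℝ)
    (hval : ∀ p, AffIn g (vals p)) (hpos : ∀ p x, 0 ≤ vals p x)
    (hW : 3 * ((k+1)/2) ≤ W) :
    ∃ g' : EuclideanSpace ℝ (Fin m) → Fin ((k+1)/2 * 3) → ℝ,
      NNHidden {relu2} m W (D+1) ((k+1)/2 * 3) g' ∧
      ∃ vals' : Fin ((k+1)/2) → EuclideanSpace ℝ (Fin m) → ℝ,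
        (∀ p, AffIn g' (vals' p)) ∧ (∀ p x, 0 ≤ vals' p x) ∧
        ∀ x, ∏ p, vals' p x = ∏ j, vals j x := by
  set k2 := (k+1)/2 with hk2
  have h2p : ∀ p : Fin k2, 2 * (p:ℕ) < k := by
    intro p; have := p.isLt; omega
  set a : Fin k2 → EuclideanSpace ℝ (Fin m) → ℝ := fun p => vals ⟨2*p, h2p p⟩ with ha
  set b : Fin k2 → EuclideanSpace ℝ (Fin m) → ℝ :=
    fun p => if h : 2*(p:ℕ)+1 < k then vals ⟨2*(p:ℕ)+1, h⟩ else fun _ => 1 with hb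
  have hA : ∀ p, AffIn g (a p) := fun p => hval _
  have hB : ∀ p, AffIn g (b p) := by
    intro p; rw [hb]; dsimp only; split
    · exact hval _
    · exact AffIn.const 1
  have hAn : ∀ p x, 0 ≤ a p x := fun p x => hpos _ x
  have hBn : ∀ p x, 0 ≤ b p x := by
    intro p x; rw [hb]; dsimp only; split
    · exact hpos _ x
    · norm_num
  set Pre : Fin k2 × Fin 3 → EuclideanSpace ℝ (Fin m) → ℝ :=
    fun q => ![fun x => a q.1 x + b q.1 x, fun x => a q.1 x - b q.1 x,
      fun x => b q.1 x - a q.1 x] q.2 with hPre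
  have hPreAff : ∀ q, AffIn g (Pre q) := by
    rintro ⟨p, r⟩
    fin_cases r
    · exact (hA p).add (hB p)
    · exact (hA p).sub (hB p)
    · exact (hB p).sub (hA p)
  choose c β hcβ using hPreAff
  set e := (finProdFinEquiv : Fin k2 × Fin 3 ≃ Fin (k2 * 3))
  set A : Matrix (Fin (k2*3)) (Fin n) ℝ := fun t s => c (e.symm t) s with hAdef
  set bb : Fin (k2*3) → ℝ := fun t => β (e.symm t) with hbbdef
  have hnet := NNHidden.layer hg A bb (fun _ => relu2) (fun _ => rfl) (by omega)
  set g' : EuclideanSpace ℝ (Fin m) → Fin (k2*3) → ℝ :=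
    fun x j => relu2 ((A.mulVec (g x) + bb) j) with hg'def
  have hg'eval : ∀ x t, g' x t = relu2 (Pre (e.symm t) x) := by
    intro x t
    rw [hg'def]
    dsimp only
    congr 1
    rw [hcβ (e.symm t) x]
    simp [Matrix.mulVec, dotProduct, hAdef, hbbdef]
  refine ⟨g', hnet, fun p x => a p x * b p x, ?_, fun p x => mul_nonneg (hAn p x) (hBn p x), ?_⟩
  · -- affinity of products in g'
    intro p
    refine ⟨fun t => if (e.symm t).1 = p then ![(1:ℝ)/4, -(1/4), -(1/4)] (e.symm t).2 else 0,
      0, fun x => ?_⟩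
    rw [add_zero]
    have := Fintype.sum_equiv e
      (fun q : Fin k2 × Fin 3 =>
        (if q.1 = p then ![(1:ℝ)/4, -(1/4), -(1/4)] q.2 else 0) * relu2 (Pre q x))
      (fun t => (if (e.symm t).1 = p then ![(1:ℝ)/4, -(1/4), -(1/4)] (e.symm t).2 else 0)
        * g' x t) ?_
    · rw [← this, Fintype.sum_prod_type]
      rw [Finset.sum_eq_single p]
      · simp only [if_pos rfl]
        rw [Fin.sum_univ_three]
        have hab := mul_eq_relu2 (a p x) (b p x) (hAn p x) (hBn p x)
        simp only [hPre]
        simp [Matrix.cons_val_zero, Matrix.cons_val_one]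
        linarith [hab]
      · intro q _ hq; simp [hq]
      · intro hn; exact absurd (Finset.mem_univ p) hn
    · intro q; rw [hg'eval x (e q), Equiv.symm_apply_apply]
  · -- the product identity
    intro x
    set F : ℕ → ℝ := fun j => if h : j < k then vals ⟨j, h⟩ x else 1 with hF
    have h1 : ∏ j : Fin k, vals j x = ∏ j ∈ Finset.range k, F j := by
      rw [← Fin.prod_univ_eq_prod_range F k]
      refine Finset.prod_congr rfl fun j _ => ?_
      rw [hF]; dsimp only; rw [dif_pos j.isLt]
    have h2 : ∏ j ∈ Finset.range k, F j = ∏ j ∈ Finset.range (2*k2), F j := by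
      rcases (by omega : 2*k2 = k ∨ 2*k2 = k+1) with h | h
      · rw [h]
      · rw [h, Finset.prod_range_succ, hF]; dsimp only
        rw [dif_neg (lt_irrefl k), mul_one]
    have h3 : ∀ p : Fin k2, a p x * b p x = F (2*(p:ℕ)) * F (2*(p:ℕ)+1) := by
      intro p
      rw [hF, ha, hb]; dsimp only
      rw [dif_pos (h2p p)]
      by_cases h : 2*(p:ℕ)+1 < k
      · rw [dif_pos h, dif_pos h]
      · rw [dif_neg h, dif_neg h]
    calc ∏ p : Fin k2, a p x * b p x
        = ∏ p : Fin k2, (F (2*(p:ℕ)) * F (2*(p:ℕ)+1)) :=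
          Finset.prod_congr rfl (fun p _ => h3 p)
      _ = ∏ p ∈ Finset.range k2, (F (2*p) * F (2*p+1)) :=
          Fin.prod_univ_eq_prod_range (fun j => F (2*j) * F (2*j+1)) k2
      _ = ∏ j ∈ Finset.range (2*k2), F j := prod_pair F k2
      _ = ∏ j : Fin k, vals j x := by rw [← h2, h1]

lemma reduce : ∀ k : ℕ, 1 ≤ k → ∀ {m W D n : ℕ} {g : EuclideanSpace ℝ (Fin m) → Fin n → ℝ},
    NNHidden {relu2} m W D n g →
    ∀ vals : Fin k → EuclideanSpace ℝ (Fin m) → ℝ,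
    (∀ p, AffIn g (vals p)) → (∀ p x, 0 ≤ vals p x) → 3 * ((k+1)/2) ≤ W →
    ∃ (n' : ℕ) (g' : EuclideanSpace ℝ (Fin m) → Fin n' → ℝ),
      NNHidden {relu2} m W (D + Nat.clog 2 k) n' g' ∧
      AffIn g' (fun x => ∏ p, vals p x) := by
  intro k
  induction k using Nat.strong_induction_on with
  | _ k IH =>
    intro hk m W D n g hg vals hval hpos hW
    rcases eq_or_lt_of_le hk with h1 | h1
    · -- k = 1
      have hk1 : k = 1 := h1.symm
      subst hk1
      refine ⟨n, g, by simpa using hg, ?_⟩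
      obtain ⟨c, b, hcb⟩ := hval 0
      exact ⟨c, b, fun x => by simpa using hcb x⟩
    · -- k ≥ 2
      obtain ⟨g', hnet, vals', hval', hpos', hprod⟩ := layer_step hg vals hval hpos hW
      have hk2lt : (k+1)/2 < k := by omega
      have hk2ge : 1 ≤ (k+1)/2 := by omega
      have hW2 : 3 * (((k+1)/2+1)/2) ≤ W := by omega
      obtain ⟨n', g'', hnet', haff⟩ := IH ((k+1)/2) hk2lt hk2ge hnet vals' hval' hpos' hW2
      have hclog : Nat.clog 2 k = Nat.clog 2 ((k+1)/2) + 1 := by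
        rw [Nat.clog_of_two_le (by norm_num) h1]
        norm_num
      have hdep : D + Nat.clog 2 k = (D + 1) + Nat.clog 2 ((k+1)/2) := by omega
      refine ⟨n', g'', by rw [hdep]; exact hnet', ?_⟩
      obtain ⟨c, b, hcb⟩ := haff
      exact ⟨c, b, fun x => by
        change ∏ p : Fin k, vals p x = _
        rw [← hprod x]; exact hcb x⟩

/-- First layer: computes all `relu2(x_j - knot)` values, width `4d`. -/
lemma first_layer (d : ℕ) (l : ℕ) (i : Fin d → ℤ) :
    ∃ g : EuclideanSpace ℝ (Fin d) → Fin (d * 4) → ℝ,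
      NNHidden {relu2} d (4 * d) 1 (d * 4) g ∧
      ∀ p : Fin d, AffIn g (fun x => bspline l (i p) (x p)) := by
  set e := (finProdFinEquiv : Fin d × Fin 4 ≃ Fin (d * 4))
  set A : Matrix (Fin (d*4)) (Fin d) ℝ :=
    fun t s => if s = (e.symm t).1 then 1 else 0 with hA
  set bb : Fin (d*4) → ℝ :=
    fun t => -(((i (e.symm t).1 : ℝ) + (((e.symm t).2 : ℕ) : ℝ)) * (2:ℝ)^(-(l:ℤ))) with hbb
  have hbase : NNHidden {relu2} d (4*d) 0 d (fun x j => x j) := NNHidden.base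
  have hnet := NNHidden.layer hbase A bb (fun _ => relu2) (fun _ => rfl)
    (by omega)
  set g : EuclideanSpace ℝ (Fin d) → Fin (d*4) → ℝ :=
    fun x t => relu2 ((A.mulVec (fun j => x j) + bb) t) with hgdef
  have hgeval : ∀ x t, g x t =
      relu2 (x (e.symm t).1 -
        ((i (e.symm t).1 : ℝ) + (((e.symm t).2 : ℕ) : ℝ)) * (2:ℝ)^(-(l:ℤ))) := by
    intro x t
    rw [hgdef]; dsimp only
    congr 1
    simp [Matrix.mulVec, dotProduct, hA, hbb, ite_mul, sub_eq_add_neg]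
  refine ⟨g, hnet, fun p => ?_⟩
  set coef : Fin 4 → ℝ :=
    fun r => (2:ℝ)^(2*(l:ℤ)-1) * (-1:ℝ)^(r:ℕ) * (Nat.choose 3 (r:ℕ)) with hcoef
  refine ⟨fun t => if (e.symm t).1 = p then coef (e.symm t).2 else 0, 0, fun x => ?_⟩
  rw [add_zero]
  have hsum := Fintype.sum_equiv e
    (fun q : Fin d × Fin 4 => (if q.1 = p then coef q.2 else 0) *
      relu2 (x q.1 - ((i q.1 : ℝ) + ((q.2 : ℕ) : ℝ)) * (2:ℝ)^(-(l:ℤ))))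
    (fun t => (if (e.symm t).1 = p then coef (e.symm t).2 else 0) * g x t) ?_
  · rw [← hsum, Fintype.sum_prod_type]
    rw [Finset.sum_eq_single p]
    · simp only [if_pos rfl]
      rw [Fin.sum_univ_four]
      rw [hcoef, bspline, Finset.mul_sum, Finset.sum_range_succ, Finset.sum_range_succ,
        Finset.sum_range_succ, Finset.sum_range_one]
      simp only [relu2]
      norm_num [show ((0:Fin 4):ℕ) = 0 from rfl, show ((1:Fin 4):ℕ) = 1 from rfl,
        show ((2:Fin 4):ℕ) = 2 from rfl, show ((3:Fin 4):ℕ) = 3 from rfl]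
      ring
    · intro q _ hq; simp [hq]
    · intro hn; exact absurd (Finset.mem_univ p) hn
  · intro q; dsimp only; rw [hgeval x (e q), Equiv.symm_apply_apply]

/-- **Exact implementation of multivariate B-splines by `ReLU²` networks (Lemma 3.4).**
For `d ≥ 1`, every multivariate cardinal B-spline `N_{l,i}` of order `3` is
implemented exactly by a `ReLU²` network of depth `⌈log₂ d⌉ + 2` and width at
most `4d`. -/
theorem bspline_is_relu2_network (d : ℕ) (hd : 1 ≤ d) (l : ℕ) (i : Fin d → ℤ) :
    ∃ u : EuclideanSpace ℝ (Fin d) → ℝ,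
      IsNetwork {relu2} d (Nat.clog 2 d + 2) (4 * d) u ∧
      ∀ x, u x = bsplineMulti d l i x := by
  obtain ⟨g1, hnet1, haff1⟩ := first_layer d l i
  obtain ⟨n', g', hnet', haff⟩ := reduce d hd hnet1
    (fun p x => bspline l (i p) (x p)) haff1
    (fun p x => bspline_nonneg l (i p) (x p)) (by omega)
  obtain ⟨c, b, hcb⟩ := haff
  refine ⟨fun x => bsplineMulti d l i x,
    ⟨n', g', fun _ s => c s, b, ?_, ?_⟩, fun x => rfl⟩
  · have hD : Nat.clog 2 d + 2 - 1 = 1 + Nat.clog 2 d := by omega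
    rw [hD]; exact hnet'
  · intro x
    have hmv : (Matrix.mulVec (fun (_ : Fin 1) s => c s) (g' x)) 0
        = ∑ s, c s * g' x s := by
      simp [Matrix.mulVec, dotProduct]
    rw [hmv]
    change ∏ j, bspline l (i j) (x j) = _
    exact hcb x
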